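/- arXiv:2302.00264 — 5 statements merged into one kernel-verified Lean document; each statement's English description precedes it below -/
import Mathlib

section
/- In any goods instance, if there is an agent i and distinct items j, j' with v_i({j, j'}) ≥ μ_i and v_{i'}({j, j'}) ≤ μ_{i'} for every other agent i' ≠ i, then removing agent i together with the items {j, j'} (allocating {j, j'} to i) is a valid reduction. -/
open Finset

/-- `A` is an (ordered) partition of the item set `M` into bundles indexed by
the agent set `N`: bundles are pairwise disjoint subsets of `M` whose union is `M`. -/
def IsPartition (N M : Finset ℕ) (A : ℕ → Finset ℕ) : Prop :=
  (∀ i ∈ N, A i ⊆ M) ∧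
  (∀ i ∈ N, ∀ j ∈ N, i ≠ j → Disjoint (A i) (A j)) ∧
  N.biUnion A = M

/-- Additive value of a bundle `B` under item values `v`. -/
noncomputable def bval (v : ℕ → ℝ) (B : Finset ℕ) : ℝ := ∑ g ∈ B, v g

/-- The maximin share of an agent with item values `v`, over the instance with
agent set `N` and item set `M`: the largest, over all partitions, of the minimum
bundle value. -/
noncomputable def mms (N M : Finset ℕ) (v : ℕ → ℝ) : ℝ :=
  sSup { x | ∃ A : ℕ → Finset ℕ, IsPartition N M A ∧
    x = sInf ((fun i => bval v (A i)) '' (N : Set ℕ)) }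

/-- `A` is an MMS partition for an agent with item values `v`: every bundle is
worth at least the agent's maximin share. -/
def IsMMSPartition (N M : Finset ℕ) (v : ℕ → ℝ) (A : ℕ → Finset ℕ) : Prop :=
  IsPartition N M A ∧ ∀ j ∈ N, mms N M v ≤ bval v (A j)

/-- The instance `(N, M, v)` admits an MMS allocation: an allocation giving
every agent a bundle worth at least her maximin share. -/
def ExistsMMSAllocation (N M : Finset ℕ) (v : ℕ → ℕ → ℝ) : Prop :=
  ∃ A : ℕ → Finset ℕ, IsPartition N M A ∧
    ∀ i ∈ N, mms N M (v i) ≤ bval (v i) (A i)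

/-- A goods instance: all item values are non-negative. -/
def GoodsInstance (N M : Finset ℕ) (v : ℕ → ℕ → ℝ) : Prop :=
  ∀ i ∈ N, ∀ j ∈ M, 0 ≤ v i j

/-- A chores instance: all item values are non-positive. -/
def ChoresInstance (N M : Finset ℕ) (v : ℕ → ℕ → ℝ) : Prop :=
  ∀ i ∈ N, ∀ j ∈ M, v i j ≤ 0

/-- Ordered goods instance: lower-numbered items are (weakly) more valuable. -/
def OrderedGoods (N M : Finset ℕ) (v : ℕ → ℕ → ℝ) : Prop :=
  ∀ i ∈ N, ∀ j ∈ M, ∀ k ∈ M, j ≤ k → v i k ≤ v i j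

/-- Ordered chores instance: lower-numbered items are (weakly) worse. -/
def OrderedChores (N M : Finset ℕ) (v : ℕ → ℕ → ℝ) : Prop :=
  ∀ i ∈ N, ∀ j ∈ M, ∀ k ∈ M, j ≤ k → v i j ≤ v i k

/-- Removing agents `N'` and items `M'` is a valid reduction: `M'` can be
partitioned among the agents of `N'` so that each receives a bundle worth at
least her MMS in the original instance, and in the reduced instance every
remaining agent's MMS is at least her MMS in the original instance. -/
def ValidReduction (N M : Finset ℕ) (v : ℕ → ℕ → ℝ) (N' M' : Finset ℕ) : Prop :=
  N' ⊆ N ∧ M' ⊆ M ∧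
  (∃ B : ℕ → Finset ℕ, IsPartition N' M' B ∧
    ∀ i ∈ N', mms N M (v i) ≤ bval (v i) (B i)) ∧
  ∀ i ∈ N \ N', mms N M (v i) ≤ mms (N \ N') (M \ M') (v i)

/-- In an ordered instance, bundle `B` dominates bundle `B'`: there is an
injective map `f : B' → B` with `f j ≤ j` for all `j ∈ B'`. -/
def Dominates (B B' : Finset ℕ) : Prop :=
  ∃ f : ℕ → ℕ, Set.InjOn f (B' : Set ℕ) ∧ ∀ j ∈ B', f j ∈ B ∧ f j ≤ j

/-! Take an MMS partition of agent `i' ≠ i`. Merging the (at most two) bundles that contain `j`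
and `j'` and then dropping these two items costs at most `v_{i'}({j, j'}) ≤ μ_{i'}`, so the merged
bundle is still worth `μ_{i'}`; the result is a partition of the remaining items into `n - 1`
bundles, each worth at least `μ_{i'}`. -/

namespace IsPartition

variable {N M : Finset ℕ} {A : ℕ → Finset ℕ}

lemma ite_eq {i : ℕ} (hi : i ∈ N) : IsPartition N M (fun k => if k = i then M else ∅) := by
  refine ⟨fun k _ => ?_, fun k _ l _ hkl => ?_, ?_⟩
  · dsimp only
    split_ifs <;> simp
  · rcases eq_or_ne k i with rfl | hk
    · simp [hkl.symm]
    · simp [hk]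
  · ext g
    simp only [mem_biUnion]
    constructor
    · rintro ⟨k, -, hg⟩
      split_ifs at hg <;> simp_all
    · exact fun hg => ⟨i, hi, by simpa using hg⟩

lemma comp_equiv {N' : Finset ℕ} (hA : IsPartition N' M A) (e : ℕ ≃ ℕ)
    (he : ∀ k, k ∈ N ↔ e k ∈ N') : IsPartition N M (A ∘ e) := by
  obtain ⟨hsub, hdisj, hunion⟩ := hA
  refine ⟨fun k hk => hsub _ ((he k).1 hk),
    fun k hk l hl hkl => hdisj _ ((he k).1 hk) _ ((he l).1 hl) (e.injective.ne hkl), ?_⟩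
  rw [← hunion]
  ext g
  simp only [mem_biUnion, Function.comp_apply]
  constructor
  · rintro ⟨k, hk, hg⟩
    exact ⟨e k, (he k).1 hk, hg⟩
  · rintro ⟨d, hd, hg⟩
    exact ⟨e.symm d, (he _).2 (by simpa using hd), by simpa using hg⟩

lemma merge (hA : IsPartition N M A) {a b : ℕ} (ha : a ∈ N) (hb : b ∈ N) (hab : a ≠ b)
    {S : Finset ℕ} (hS : S ⊆ A a ∪ A b) :
    IsPartition (N \ {b}) (M \ S) (Function.update A a ((A a ∪ A b) \ S)) := by
  obtain ⟨hsub, hdisj, hunion⟩ := hA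
  have hpair : ∀ l ∈ N, l ≠ a → l ≠ b → Disjoint (A a ∪ A b) (A l) := fun l hl hla hlb =>
    disjoint_union_left.mpr ⟨hdisj a ha l hl (Ne.symm hla), hdisj b hb l hl (Ne.symm hlb)⟩
  have hsub' : ∀ k ∈ N \ {b}, Function.update A a ((A a ∪ A b) \ S) k ⊆ M \ S := by
    intro k hk
    rw [mem_sdiff, mem_singleton] at hk
    rcases eq_or_ne k a with rfl | hka
    · simpa using sdiff_subset_sdiff (union_subset (hsub k ha) (hsub b hb)) le_rfl
    · rw [Function.update_of_ne hka, subset_sdiff]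
      exact ⟨hsub k hk.1, ((hpair k hk.1 hka hk.2).symm.mono_right hS)⟩
  refine ⟨hsub', fun k hk l hl hkl => ?_, ?_⟩
  · rw [mem_sdiff, mem_singleton] at hk hl
    rcases eq_or_ne k a with rfl | hka
    · rw [Function.update_self, Function.update_of_ne (Ne.symm hkl)]
      exact (hpair l hl.1 (Ne.symm hkl) hl.2).mono_left sdiff_subset
    rcases eq_or_ne l a with rfl | hla
    · rw [Function.update_self, Function.update_of_ne hkl]
      exact ((hpair k hk.1 hkl hk.2).mono_left sdiff_subset).symm
    · rw [Function.update_of_ne hka, Function.update_of_ne hla]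
      exact hdisj k hk.1 l hl.1 hkl
  · refine (biUnion_subset.mpr hsub').antisymm fun g hg => ?_
    rw [mem_sdiff] at hg
    obtain ⟨d, hd, hgd⟩ := mem_biUnion.mp (hunion ▸ hg.1)
    rw [mem_biUnion]
    by_cases hdab : d = a ∨ d = b
    · refine ⟨a, mem_sdiff.mpr ⟨ha, by simpa using hab⟩, ?_⟩
      rw [Function.update_self, mem_sdiff]
      rcases hdab with rfl | rfl
      · exact ⟨mem_union_left _ hgd, hg.2⟩
      · exact ⟨mem_union_right _ hgd, hg.2⟩
    · rw [not_or] at hdab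
      refine ⟨d, mem_sdiff.mpr ⟨hd, by simpa using hdab.2⟩, ?_⟩
      rwa [Function.update_of_ne hdab.1]

lemma exists_ne_mem_union (hA : IsPartition N M A) (hN : 1 < #N) {a g : ℕ} (ha : a ∈ N)
    (hg : g ∈ M) : ∃ b ∈ N, b ≠ a ∧ g ∈ A a ∪ A b := by
  obtain ⟨c, hc, hgc⟩ := mem_biUnion.mp (hA.2.2 ▸ hg)
  rcases eq_or_ne c a with rfl | hca
  · obtain ⟨b, hb, hbc⟩ := exists_mem_ne hN c
    exact ⟨b, hb, hbc, mem_union_left _ hgc⟩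
  · exact ⟨c, hc, hca, mem_union_right _ hgc⟩

end IsPartition

section MaximinShare

variable {N M : Finset ℕ} {v : ℕ → ℝ}

def mmsCandidates (N M : Finset ℕ) (v : ℕ → ℝ) : Set ℝ :=
  { x | ∃ A : ℕ → Finset ℕ, IsPartition N M A ∧
    x = sInf ((fun i => bval v (A i)) '' (N : Set ℕ)) }

lemma mms_eq_sSup_mmsCandidates : mms N M v = sSup (mmsCandidates N M v) := rfl

lemma mmsCandidates_subset (hN : N.Nonempty) :
    mmsCandidates N M v ⊆ (M.powerset.image (bval v) : Set ℝ) := by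
  rintro x ⟨A, hA, rfl⟩
  obtain ⟨k, hk, hmin⟩ := (hN.to_set.image (fun k => bval v (A k))).csInf_mem
    (N.finite_toSet.image _)
  rw [← hmin]
  simp only [coe_image, coe_powerset, Set.mem_image, Set.mem_preimage, Set.mem_powerset_iff,
    coe_subset]
  exact ⟨A k, hA.1 k hk, rfl⟩

lemma mmsCandidates_finite (hN : N.Nonempty) : (mmsCandidates N M v).Finite :=
  (M.powerset.image (bval v)).finite_toSet.subset (mmsCandidates_subset hN)

lemma mmsCandidates_nonempty (hN : N.Nonempty) : (mmsCandidates N M v).Nonempty :=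
  ⟨_, _, IsPartition.ite_eq hN.choose_spec, rfl⟩

lemma exists_isMMSPartition (hN : N.Nonempty) : ∃ A, IsMMSPartition N M v A := by
  obtain ⟨A, hA, hmms⟩ := (mmsCandidates_nonempty hN).csSup_mem (mmsCandidates_finite hN)
  refine ⟨A, hA, fun k hk => ?_⟩
  rw [mms_eq_sSup_mmsCandidates, hmms]
  exact csInf_le (N.finite_toSet.image _).bddBelow ⟨k, hk, rfl⟩

lemma le_mms_of_isPartition (hN : N.Nonempty) {A : ℕ → Finset ℕ} (hA : IsPartition N M A)
    {c : ℝ} (hc : ∀ k ∈ N, c ≤ bval v (A k)) : c ≤ mms N M v :=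
  calc c ≤ sInf ((fun k => bval v (A k)) '' (N : Set ℕ)) :=
        le_csInf (hN.to_set.image _) (Set.forall_mem_image.mpr hc)
    _ ≤ mms N M v := le_csSup (mmsCandidates_finite hN).bddAbove ⟨A, hA, rfl⟩

end MaximinShare

lemma mem_sdiff_singleton_iff_swap {N : Finset ℕ} {i b : ℕ} (hi : i ∈ N) (hb : b ∈ N) (k : ℕ) :
    k ∈ N \ {i} ↔ Equiv.swap i b k ∈ N \ {b} := by
  simp only [mem_sdiff, mem_singleton, Equiv.swap_apply_def]
  split_ifs <;> grind

lemma mms_le_mms_sdiff_pair {N M : Finset ℕ} {v : ℕ → ℝ} {i j j' : ℕ} (hN : 1 < #N)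
    (hi : i ∈ N) (hj : j ∈ M) (hj' : j' ∈ M) (hpair : bval v {j, j'} ≤ mms N M v) :
    mms N M v ≤ mms (N \ {i}) (M \ {j, j'}) v := by
  obtain ⟨A, hA, hAmms⟩ := exists_isMMSPartition (v := v) (M := M) ⟨i, hi⟩
  obtain ⟨a, ha, hja⟩ := mem_biUnion.mp (hA.2.2 ▸ hj)
  obtain ⟨b, hb, hba, hj'b⟩ := hA.exists_ne_mem_union hN ha hj'
  have hS : {j, j'} ⊆ A a ∪ A b :=
    insert_subset (mem_union_left _ hja) (singleton_subset_iff.mpr hj'b)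
  have hmerged : mms N M v ≤ bval v ((A a ∪ A b) \ {j, j'}) :=
    calc mms N M v ≤ bval v (A a) + bval v (A b) - bval v {j, j'} := by
          linarith [hAmms a ha, hAmms b hb]
      _ = bval v ((A a ∪ A b) \ {j, j'}) := by
          rw [bval, bval, bval, bval, sum_sdiff_eq_sub hS, sum_union (hA.2.1 a ha b hb hba.symm)]
  have hB := hA.merge ha hb hba.symm hS
  have hBmms : ∀ k ∈ N \ {b},
      mms N M v ≤ bval v (Function.update A a ((A a ∪ A b) \ {j, j'}) k) := by
    intro k hk
    rcases eq_or_ne k a with rfl | hka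
    · simpa using hmerged
    · simpa [Function.update_of_ne hka] using hAmms k (mem_sdiff.mp hk).1
  have hswap := mem_sdiff_singleton_iff_swap hi hb
  obtain ⟨i', hi', hi'i⟩ := exists_mem_ne hN i
  exact le_mms_of_isPartition ⟨i', by simpa [hi'i] using hi'⟩ (hB.comp_equiv _ hswap)
    fun k hk => hBmms _ ((hswap k).1 hk)

theorem two_item_reduction_general (n m : ℕ) (v : ℕ → ℕ → ℝ)
    (i j j' : ℕ) (hi : i ∈ Finset.Icc 1 n)
    (hj : j ∈ Finset.Icc 1 m) (hj' : j' ∈ Finset.Icc 1 m)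
    (hval : mms (Finset.Icc 1 n) (Finset.Icc 1 m) (v i) ≤ bval (v i) {j, j'})
    (hothers : ∀ i' ∈ Finset.Icc 1 n, i' ≠ i →
      bval (v i') {j, j'} ≤ mms (Finset.Icc 1 n) (Finset.Icc 1 m) (v i')) :
    ValidReduction (Finset.Icc 1 n) (Finset.Icc 1 m) v {i} {j, j'} := by
  refine ⟨singleton_subset_iff.mpr hi, insert_subset hj (singleton_subset_iff.mpr hj'),
    ⟨_, IsPartition.ite_eq (mem_singleton_self i), fun k hk => ?_⟩, fun i' hi' => ?_⟩
  · simpa [mem_singleton.mp hk] using hval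
  · obtain ⟨hi'N, hi'i⟩ := mem_sdiff.mp hi'
    have hN : 1 < #(Finset.Icc 1 n) :=
      one_lt_card.mpr ⟨i, hi, i', hi'N, fun h => hi'i (mem_singleton.mpr h.symm)⟩
    exact mms_le_mms_sdiff_pair hN hi hj hj' (hothers i' hi'N (by simpa using hi'i))

theorem two_item_reduction (n m : ℕ) (v : ℕ → ℕ → ℝ)
    (hgoods : GoodsInstance (Finset.Icc 1 n) (Finset.Icc 1 m) v)
    (i j j' : ℕ) (hi : i ∈ Finset.Icc 1 n)
    (hj : j ∈ Finset.Icc 1 m) (hj' : j' ∈ Finset.Icc 1 m) (hne : j ≠ j')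
    (hval : mms (Finset.Icc 1 n) (Finset.Icc 1 m) (v i) ≤ bval (v i) {j, j'})
    (hothers : ∀ i' ∈ Finset.Icc 1 n, i' ≠ i →
      bval (v i') {j, j'} ≤ mms (Finset.Icc 1 n) (Finset.Icc 1 m) (v i')) :
    ValidReduction (Finset.Icc 1 n) (Finset.Icc 1 m) v {i} {j, j'} :=
  two_item_reduction_general n m v i j j' hi hj hj' hval hothers
end

section
/- In any goods instance, if there is a single allocation A that is an MMS partition of at least n − 1 of the n agents, then an MMS allocation exists. -/
open Finset

/-!
Let `i₀` be the agent for whom `A` need not be an MMS partition. Since the bundles of any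
partition have the same total value, some bundle of every partition is worth at most the
best bundle `A j` for `i₀`, so `μ_{i₀} ≤ v_{i₀}(A j)`. Giving `A j` to `i₀` and `A i₀` to `j`
is then an MMS allocation, because every other agent values every bundle of `A` at least at
her maximin share.
-/

theorem Equiv.swap_apply_mem_iff {α : Type*} [DecidableEq α] {s : Finset α} {a b : α}
    (ha : a ∈ s) (hb : b ∈ s) (i : α) :
    Equiv.swap a b i ∈ s ↔ i ∈ s := by
  rw [Equiv.swap_apply_def]
  split_ifs with hia hib
  · exact ⟨fun _ => hia ▸ ha, fun _ => hb⟩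
  · exact ⟨fun _ => hib ▸ hb, fun _ => ha⟩
  · rfl

section Partition

variable {N M : Finset ℕ} {A B : ℕ → Finset ℕ}

theorem IsPartition.sum_bval (hA : IsPartition N M A) (v : ℕ → ℝ) :
    ∑ i ∈ N, bval v (A i) = bval v M := by
  rw [bval, ← hA.2.2, sum_biUnion hA.2.1]
  rfl

theorem IsPartition.comp_perm (hA : IsPartition N M A) (σ : Equiv.Perm ℕ)
    (hσ : ∀ i, σ i ∈ N ↔ i ∈ N) : IsPartition N M (A ∘ σ) := by
  refine ⟨fun i hi => hA.1 _ ((hσ i).2 hi),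
    fun i hi j hj hij => hA.2.1 _ ((hσ i).2 hi) _ ((hσ j).2 hj) (σ.injective.ne hij), ?_⟩
  rw [← hA.2.2]
  ext g
  simp only [mem_biUnion, Function.comp_apply]
  constructor
  · rintro ⟨i, hi, hg⟩
    exact ⟨σ i, (hσ i).2 hi, hg⟩
  · rintro ⟨i, hi, hg⟩
    exact ⟨σ.symm i, (hσ _).1 (by simpa using hi), by simpa using hg⟩

theorem IsPartition.exists_bval_le (hB : IsPartition N M B) (hA : IsPartition N M A)
    (v : ℕ → ℝ) {j : ℕ} (hN : N.Nonempty) (hj : ∀ k ∈ N, bval v (A k) ≤ bval v (A j)) :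
    ∃ i ∈ N, bval v (B i) ≤ bval v (A j) :=
  exists_le_of_sum_le hN <| calc
    ∑ i ∈ N, bval v (B i) = ∑ i ∈ N, bval v (A i) := by
      rw [hB.sum_bval, hA.sum_bval]
    _ ≤ ∑ _i ∈ N, bval v (A j) := sum_le_sum hj

theorem mms_le_of_forall_exists_bval_le {v : ℕ → ℝ} (hA : IsPartition N M A) {c : ℝ}
    (h : ∀ B, IsPartition N M B → ∃ i ∈ N, bval v (B i) ≤ c) : mms N M v ≤ c := by
  refine csSup_le ⟨_, A, hA, rfl⟩ ?_
  rintro x ⟨B, hB, rfl⟩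
  obtain ⟨i, hi, hBi⟩ := h B hB
  exact (csInf_le ((N.finite_toSet.image _).bddBelow) ⟨i, hi, rfl⟩).trans hBi

theorem IsPartition.exists_mms_le_bval (hA : IsPartition N M A) (hN : N.Nonempty)
    (v : ℕ → ℝ) :
    ∃ j ∈ N, mms N M v ≤ bval v (A j) := by
  obtain ⟨j, hj, hjmax⟩ := N.exists_max_image (fun k => bval v (A k)) hN
  exact ⟨j, hj, mms_le_of_forall_exists_bval_le hA fun B hB => hB.exists_bval_le hA v hN hjmax⟩

end Partition

theorem identical_mms_partitions_allocation_general (n m : ℕ) (v : ℕ → ℕ → ℝ)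
    (A : ℕ → Finset ℕ)
    (hA : IsPartition (Finset.Icc 1 n) (Finset.Icc 1 m) A)
    (hmost : ∃ i₀ : ℕ, ∀ i ∈ Finset.Icc 1 n, i ≠ i₀ →
      IsMMSPartition (Finset.Icc 1 n) (Finset.Icc 1 m) (v i) A) :
    ExistsMMSAllocation (Finset.Icc 1 n) (Finset.Icc 1 m) v := by
  obtain ⟨i₀, hmost⟩ := hmost
  by_cases hi₀ : i₀ ∈ Finset.Icc 1 n
  · obtain ⟨j, hj, hi₀j⟩ := hA.exists_mms_le_bval ⟨i₀, hi₀⟩ (v i₀)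
    refine ⟨A ∘ Equiv.swap i₀ j, hA.comp_perm _ (Equiv.swap_apply_mem_iff hi₀ hj), fun i hi => ?_⟩
    rcases eq_or_ne i i₀ with rfl | hii₀
    · simpa using hi₀j
    · exact (hmost i hi hii₀).2 _ ((Equiv.swap_apply_mem_iff hi₀ hj i).2 hi)
  · exact ⟨A, hA, fun i hi => (hmost i hi (ne_of_mem_of_not_mem hi hi₀)).2 i hi⟩

theorem identical_mms_partitions_allocation (n m : ℕ) (v : ℕ → ℕ → ℝ)
    (hgoods : GoodsInstance (Finset.Icc 1 n) (Finset.Icc 1 m) v)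
    (A : ℕ → Finset ℕ)
    (hA : IsPartition (Finset.Icc 1 n) (Finset.Icc 1 m) A)
    (hmost : ∃ i₀ : ℕ, ∀ i ∈ Finset.Icc 1 n, i ≠ i₀ →
      IsMMSPartition (Finset.Icc 1 n) (Finset.Icc 1 m) (v i) A) :
    ExistsMMSAllocation (Finset.Icc 1 n) (Finset.Icc 1 m) v :=
  identical_mms_partitions_allocation_general n m v A hA hmost
end

section
/- In any ordered goods instance with m = n + c items for some integer c with n > c > 0, every agent i satisfies v_i(j) ≥ μ_i for every item j ∈ {1, 2, …, n − c}. -/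
open Finset

/-!
Fix an agent and an item `j ≤ n - c`; we show that every partition of the `n + c` items into
`n` bundles has a bundle worth at most `v j`, so the maximin share is at most `v j`.
Weight each bundle by its size plus the number of its items among `1, …, j - 1`. The weights
sum to `(n + c) + (j - 1) < 2n`, so some bundle has weight at most one: it is empty or a single
item `g ≥ j`, and in either case it is worth at most `v j`.
-/

lemma IsPartition.filter {N M : Finset ℕ} {A : ℕ → Finset ℕ} (hA : IsPartition N M A)
    (p : ℕ → Prop) [DecidablePred p] :
    IsPartition N (M.filter p) (fun k => (A k).filter p) :=
  ⟨fun k hk => filter_subset_filter p (hA.1 k hk),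
    fun k hk l hl hkl => (hA.2.1 k hk l hl hkl).mono (filter_subset _ _) (filter_subset _ _),
    by rw [← filter_biUnion, hA.2.2]⟩

lemma IsPartition.sum_card {N M : Finset ℕ} {A : ℕ → Finset ℕ} (hA : IsPartition N M A) :
    ∑ k ∈ N, #(A k) = #M := by
  rw [← card_biUnion fun k hk l hl hkl => hA.2.1 k hk l hl hkl, hA.2.2]

lemma IsPartition.exists_card_le_one_forall_ge_of_lt {N M : Finset ℕ} {A : ℕ → Finset ℕ}
    (hA : IsPartition N M A) {j : ℕ} (hlt : #M + #(M.filter (· < j)) < 2 * #N) :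
    ∃ k ∈ N, #(A k) ≤ 1 ∧ ∀ g ∈ A k, j ≤ g := by
  have hweight : ∑ k ∈ N, (#(A k) + #((A k).filter (· < j))) < ∑ _k ∈ N, 2 := by
    rw [sum_add_distrib, hA.sum_card, (hA.filter (· < j)).sum_card, sum_const, smul_eq_mul,
      mul_comm]
    exact hlt
  obtain ⟨k, hk, hwk⟩ := exists_lt_of_sum_lt hweight
  have hlow : (A k).filter (· < j) = ∅ :=
    card_eq_zero.mp (by have := card_filter_le (A k) (· < j); omega)
  refine ⟨k, hk, by omega, fun g hg => ?_⟩
  by_contra hgj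
  have hg_low : g ∈ (A k).filter (· < j) := mem_filter.mpr ⟨hg, not_le.mp hgj⟩
  simp [hlow] at hg_low

lemma bval_le_of_card_le_one {v : ℕ → ℝ} {B : Finset ℕ} {x : ℝ} (hB : #B ≤ 1)
    (hx : 0 ≤ x) (hle : ∀ g ∈ B, v g ≤ x) : bval v B ≤ x := by
  obtain ⟨g, hg⟩ := card_le_one_iff_subset_singleton.mp hB
  rcases subset_singleton_iff.mp hg with rfl | rfl
  · simpa [bval] using hx
  · simpa [bval] using hle g (mem_singleton_self g)

lemma mms_le_of_forall_isPartition {N M : Finset ℕ} {v : ℕ → ℝ} {x : ℝ} (hx : 0 ≤ x)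
    (h : ∀ A, IsPartition N M A → ∃ k ∈ N, bval v (A k) ≤ x) : mms N M v ≤ x := by
  refine Real.sSup_le ?_ hx
  rintro _ ⟨A, hA, rfl⟩
  obtain ⟨k, hk, hkx⟩ := h A hA
  exact (csInf_le ((N.finite_toSet.image _).bddBelow) ⟨k, hk, rfl⟩).trans hkx

theorem goods_at_mms_general (n c : ℕ) (v : ℕ → ℕ → ℝ)
    (hgoods : GoodsInstance (Finset.Icc 1 n) (Finset.Icc 1 (n + c)) v)
    (hord : OrderedGoods (Finset.Icc 1 n) (Finset.Icc 1 (n + c)) v) :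
    ∀ i ∈ Finset.Icc 1 n, ∀ j ∈ Finset.Icc 1 (n - c),
      mms (Finset.Icc 1 n) (Finset.Icc 1 (n + c)) (v i) ≤ v i j := by
  intro i hi j hj
  have hjM : j ∈ Icc 1 (n + c) := by simp only [mem_Icc] at hj ⊢; omega
  have hv : 0 ≤ v i j := hgoods i hi j hjM
  refine mms_le_of_forall_isPartition hv fun A hA => ?_
  have hlow : #((Icc 1 (n + c)).filter (· < j)) ≤ j - 1 := by
    refine (card_le_card fun g hg => ?_).trans (Nat.card_Ico 1 j).le
    simp only [mem_filter, mem_Icc, mem_Ico] at hg ⊢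
    omega
  have hlt : #(Icc 1 (n + c)) + #((Icc 1 (n + c)).filter (· < j)) < 2 * #(Icc 1 n) := by
    simp only [Nat.card_Icc, mem_Icc] at hlow hj ⊢
    omega
  obtain ⟨k, hk, hcard, habove⟩ := hA.exists_card_le_one_forall_ge_of_lt hlt
  exact ⟨k, hk, bval_le_of_card_le_one hcard hv fun g hg =>
    hord i hi j hjM g (hA.1 k hk hg) (habove g hg)⟩

theorem goods_at_mms (n c : ℕ) (hc : 0 < c) (hcn : c < n) (v : ℕ → ℕ → ℝ)
    (hgoods : GoodsInstance (Finset.Icc 1 n) (Finset.Icc 1 (n + c)) v)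
    (hord : OrderedGoods (Finset.Icc 1 n) (Finset.Icc 1 (n + c)) v) :
    ∀ i ∈ Finset.Icc 1 n, ∀ j ∈ Finset.Icc 1 (n - c),
      mms (Finset.Icc 1 n) (Finset.Icc 1 (n + c)) (v i) ≤ v i j :=
  goods_at_mms_general n c v hgoods hord
end

section
/- Let I be an ordered chores instance with m ≥ n + 1 items, and let i be an agent with an MMS partition A containing a bundle B with |B| = 2 and B ∩ {1, 2, …, n − 1} = ∅. Then i has an MMS partition A' such that (i) |A_j| = |A'_j| for every index j, (ii) {n, n + 1} is a bundle of A', and (iii) each of the chores 1, 2, …, n − 1 lies in the bundle with the same index in A and in A'. -/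
open Finset

/-! Two of the items `1, …, n + 1` share a bundle of any partition into `n` bundles; as chores are
nonpositive and ordered, that bundle is worth at most `v n + v (n + 1)`, so the pair `{n, n + 1}`
is itself worth at least the maximin share. Write `B = {a, b}` with `n ≤ a < b`. The permutation
`(b n+1)(a n)` of the items turns `B` into `{n, n + 1}`, fixes every item below `n`, and moves
every other item to an index at least as large, i.e. to a chore that is no worse; relabelling the
partition by it therefore keeps all bundle sizes and lowers the value of no bundle except `B`. -/

open Equiv

theorem IsPartition.exists_mem {N M : Finset ℕ} {A : ℕ → Finset ℕ} (hA : IsPartition N M A)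
    {g : ℕ} (hg : g ∈ M) : ∃ j ∈ N, g ∈ A j := by
  rw [← hA.2.2] at hg
  exact mem_biUnion.1 hg

theorem IsPartition.exists_lt_mem_mem {N M : Finset ℕ} {A : ℕ → Finset ℕ}
    (hA : IsPartition N M A) {s : Finset ℕ} (hs : s ⊆ M) (hcard : N.card < s.card) :
    ∃ j ∈ N, ∃ p ∈ s, ∃ q ∈ s, p < q ∧ p ∈ A j ∧ q ∈ A j := by
  choose! f hfN hf using fun g (hg : g ∈ s) => hA.exists_mem (hs hg)
  obtain ⟨x, hx, y, hy, hxy, hfxy⟩ := exists_ne_map_eq_of_card_lt_of_maps_to hcard hfN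
  rcases hxy.lt_or_gt with h | h
  · exact ⟨f x, hfN x hx, x, hx, y, hy, h, hf x hx, hfxy ▸ hf y hy⟩
  · exact ⟨f x, hfN x hx, y, hy, x, hx, h, hfxy ▸ hf y hy, hf x hx⟩

theorem IsPartition.image_perm {N M : Finset ℕ} {A : ℕ → Finset ℕ} (hA : IsPartition N M A)
    (e : Perm ℕ) (he : ∀ g ∈ M, e g ∈ M) : IsPartition N M (fun j => (A j).image e) := by
  refine ⟨fun j hj => image_subset_iff.2 fun g hg => he g (hA.1 j hj hg),
    fun j hj k hk hjk => (disjoint_image e.injective).2 (hA.2.1 j hj k hk hjk), ?_⟩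
  rw [← biUnion_image, hA.2.2]
  exact eq_of_subset_of_card_le (image_subset_iff.2 he) (card_image_of_injective _ e.injective).ge

theorem mem_image_perm_iff_of_apply_eq {α : Type*} [DecidableEq α] {e : Perm α} {s : Finset α}
    {g : α} (hg : e g = g) : g ∈ s.image e ↔ g ∈ s := by
  conv_lhs => rw [← hg]
  exact e.injective.mem_finset_image

theorem bval_le_add_of_mem {w : ℕ → ℝ} {C : Finset ℕ} (hw : ∀ g ∈ C, w g ≤ 0) {p q : ℕ}
    (hpq : p ≠ q) (hp : p ∈ C) (hq : q ∈ C) : bval w C ≤ w p + w q := by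
  rw [← sum_pair hpq]
  exact sum_le_sum_of_subset_of_nonpos' (insert_subset hp (singleton_subset_iff.2 hq))
    fun g hg _ => hw g hg

theorem bval_le_bval_image {w : ℕ → ℝ} {S C : Finset ℕ} (hw : MonotoneOn w (S : Set ℕ))
    (hC : C ⊆ S) {e : ℕ → ℕ} (he : Function.Injective e) (heS : ∀ g ∈ C, e g ∈ S)
    (hle : ∀ g ∈ C, g ≤ e g) : bval w C ≤ bval w (C.image e) := by
  rw [bval, bval, sum_image he.injOn]
  exact sum_le_sum fun g hg => hw (hC hg) (heS g hg) (hle g hg)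

theorem exists_lt_and_eq_pair_of_card_eq_two {α : Type*} [LinearOrder α] {s : Finset α}
    (hs : s.card = 2) : ∃ a b, a < b ∧ s = {a, b} := by
  obtain ⟨x, y, hxy, rfl⟩ := card_eq_two.1 hs
  rcases hxy.lt_or_gt with h | h
  · exact ⟨x, y, h, rfl⟩
  · exact ⟨y, x, h, pair_comm x y⟩

theorem le_of_mem_of_inter_Icc_eq_empty {B : Finset ℕ} {n g : ℕ} (hB : B ∩ Icc 1 (n - 1) = ∅)
    (hg : g ∈ B) (hg₁ : 1 ≤ g) : n ≤ g := by
  by_contra! hgn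
  simpa [hB] using mem_inter.2 ⟨hg, mem_Icc.2 ⟨hg₁, Nat.le_sub_one_of_lt hgn⟩⟩

theorem IsMMSPartition.mms_le_add {n m : ℕ} (hm : n + 1 ≤ m) {w : ℕ → ℝ}
    (hw : ∀ g ∈ Icc 1 m, w g ≤ 0) (hmono : MonotoneOn w (Icc 1 m : Set ℕ))
    {A : ℕ → Finset ℕ} (hA : IsMMSPartition (Icc 1 n) (Icc 1 m) w A) :
    mms (Icc 1 n) (Icc 1 m) w ≤ w n + w (n + 1) := by
  obtain ⟨j, hj, p, hp, q, hq, hpq, hpA, hqA⟩ :=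
    hA.1.exists_lt_mem_mem (s := Icc 1 (n + 1)) (Icc_subset_Icc_right hm) (by simp)
  have hsub := hA.1.1 j hj
  rw [mem_Icc] at hp hq
  calc mms (Icc 1 n) (Icc 1 m) w ≤ bval w (A j) := hA.2 j hj
    _ ≤ w p + w q := bval_le_add_of_mem (fun g hg => hw g (hsub hg)) hpq.ne hpA hqA
    _ ≤ w n + w (n + 1) :=
      add_le_add (hmono (hsub hpA) (mem_Icc.2 ⟨by omega, by omega⟩) (by omega))
        (hmono (hsub hqA) (mem_Icc.2 ⟨by omega, hm⟩) hq.2)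

section SwapMulSwap

variable {α : Type*} [DecidableEq α] {a b c d : α}

theorem swap_mul_swap_apply_left (hcb : c ≠ b) (hcd : c ≠ d) : (swap b d * swap a c) a = c := by
  rw [Perm.mul_apply, swap_apply_left, swap_apply_of_ne_of_ne hcb hcd]

theorem swap_mul_swap_apply_right (hba : b ≠ a) (hbc : b ≠ c) :
    (swap b d * swap a c) b = d := by
  rw [Perm.mul_apply, swap_apply_of_ne_of_ne hba hbc, swap_apply_left]

theorem swap_mul_swap_apply_of_ne {g : α} (hga : g ≠ a) (hgc : g ≠ c) (hgb : g ≠ b)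
    (hgd : g ≠ d) : (swap b d * swap a c) g = g := by
  rw [Perm.mul_apply, swap_apply_of_ne_of_ne hga hgc, swap_apply_of_ne_of_ne hgb hgd]

theorem swap_mul_swap_apply_mem {s : Finset α} (ha : a ∈ s) (hb : b ∈ s) (hc : c ∈ s)
    (hd : d ∈ s) {g : α} (hg : g ∈ s) : (swap b d * swap a c) g ∈ s := by
  simp only [Perm.mul_apply, swap_apply_def]
  split_ifs <;> assumption

theorem le_swap_mul_swap_apply [LinearOrder α] (hab : a ≠ b) (hca : c ≤ a) (hdb : d ≤ b)
    {g : α} (hga : g ≠ a) (hgb : g ≠ b) : g ≤ (swap b d * swap a c) g := by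
  simp only [Perm.mul_apply, swap_apply_def]
  split_ifs <;> subst_vars <;> order

end SwapMulSwap

theorem size_two_bundle_chores (n m : ℕ) (hm : n + 1 ≤ m) (v : ℕ → ℕ → ℝ)
    (hchores : ChoresInstance (Finset.Icc 1 n) (Finset.Icc 1 m) v)
    (hord : OrderedChores (Finset.Icc 1 n) (Finset.Icc 1 m) v)
    (i : ℕ) (hi : i ∈ Finset.Icc 1 n)
    (A : ℕ → Finset ℕ)
    (hA : IsMMSPartition (Finset.Icc 1 n) (Finset.Icc 1 m) (v i) A)
    (B : Finset ℕ) (hBmem : ∃ j ∈ Finset.Icc 1 n, A j = B)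
    (hBcard : B.card = 2) (hBdisj : B ∩ Finset.Icc 1 (n - 1) = ∅) :
    ∃ A' : ℕ → Finset ℕ,
      IsMMSPartition (Finset.Icc 1 n) (Finset.Icc 1 m) (v i) A' ∧
      (∀ j ∈ Finset.Icc 1 n, (A j).card = (A' j).card) ∧
      (∃ j ∈ Finset.Icc 1 n, A' j = ({n, n + 1} : Finset ℕ)) ∧
      (∀ g ∈ Finset.Icc 1 (n - 1), ∀ j ∈ Finset.Icc 1 n, (g ∈ A j ↔ g ∈ A' j)) := by
  obtain ⟨j₀, hj₀, rfl⟩ := hBmem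
  obtain ⟨a, b, hab, hB⟩ := exists_lt_and_eq_pair_of_card_eq_two hBcard
  have hsub := hA.1.1
  have ha : a ∈ A j₀ := by simp [hB]
  have hb : b ∈ A j₀ := by simp [hB]
  have hn : 1 ≤ n := (mem_Icc.1 hj₀).1.trans (mem_Icc.1 hj₀).2
  have hna : n ≤ a := le_of_mem_of_inter_Icc_eq_empty hBdisj ha (mem_Icc.1 (hsub j₀ hj₀ ha)).1
  have hnb : n < b := hna.trans_lt hab
  set e : Perm ℕ := swap b (n + 1) * swap a n
  have heM : ∀ g ∈ Icc 1 m, e g ∈ Icc 1 m := fun g => swap_mul_swap_apply_mem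
    (hsub j₀ hj₀ ha) (hsub j₀ hj₀ hb) (mem_Icc.2 ⟨hn, by omega⟩) (mem_Icc.2 ⟨by omega, hm⟩)
  have hA'j₀ : (A j₀).image e = {n, n + 1} := by
    rw [hB, image_insert, image_singleton,
      swap_mul_swap_apply_left (a := a) (b := b) (by omega) (by omega),
      swap_mul_swap_apply_right (a := a) (c := n) (d := n + 1) (by omega) (by omega)]
  refine ⟨fun j => (A j).image e, ⟨hA.1.image_perm e heM, fun j hj => ?_⟩,
    fun j _ => (card_image_of_injective _ e.injective).symm, ⟨j₀, hj₀, hA'j₀⟩, fun g hg j _ => ?_⟩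
  · dsimp only
    obtain rfl | hjj₀ := eq_or_ne j j₀
    · rw [hA'j₀, bval, sum_pair (by omega)]
      exact hA.mms_le_add hm (hchores i hi) (hord i hi)
    have hdisj := disjoint_left.1 (hA.1.2.1 j hj j₀ hj₀ hjj₀)
    exact (hA.2 j hj).trans (bval_le_bval_image (hord i hi) (hsub j hj) e.injective
      (fun g hg => heM g (hsub j hj hg)) fun g hg => le_swap_mul_swap_apply hab.ne hna hnb
        (fun h => hdisj hg (h ▸ ha)) fun h => hdisj hg (h ▸ hb))
  · have hgn := (mem_Icc.1 hg).2
    exact (mem_image_perm_iff_of_apply_eq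
      (swap_mul_swap_apply_of_ne (by omega) (by omega) (by omega) (by omega))).symm
end

section
/- Let I be an ordered chores instance with n agents and m = n + c chores, where n > c > 0. If an agent i has an MMS partition containing a bundle of size k ≥ 2, then i has an MMS partition that contains at least n − (c − k + 2) bundles of cardinality one. -/
open Finset

/-!
For chores, any partition refining an MMS partition is again an MMS partition, so we may
split bundles freely. Fix the bundle `j0` of size `k` and let `t = min k (c + 1)`. While some
bundle is empty, move one item into it from a bundle with at least two items, never letting
bundle `j0` drop below `t` items; since `m = n + c ≥ n + t - 1`, a counting argument shows
such a donor always exists. The process ends with `n` nonempty bundles, one of size at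
least `t`, and counting items then gives at least `n + t - c - 2` singletons.
-/

def Refines (N : Finset ℕ) (B A : ℕ → Finset ℕ) : Prop :=
  ∀ j ∈ N, ∃ j' ∈ N, B j ⊆ A j'

theorem Refines.refl (N : Finset ℕ) (A : ℕ → Finset ℕ) : Refines N A A :=
  fun j hj => ⟨j, hj, subset_rfl⟩

theorem Refines.trans {N : Finset ℕ} {C B A : ℕ → Finset ℕ} (hCB : Refines N C B)
    (hBA : Refines N B A) : Refines N C A := by
  intro j hj
  obtain ⟨j', hj', hCj⟩ := hCB j hj
  obtain ⟨j'', hj'', hBj'⟩ := hBA j' hj'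
  exact ⟨j'', hj'', hCj.trans hBj'⟩

theorem bval_le_bval_of_subset {v : ℕ → ℝ} {S T : Finset ℕ} (hST : S ⊆ T)
    (hv : ∀ g ∈ T, v g ≤ 0) : bval v T ≤ bval v S := by
  unfold bval
  rw [← Finset.sum_sdiff hST]
  have : ∑ g ∈ T \ S, v g ≤ 0 := Finset.sum_nonpos fun g hg => hv g (Finset.mem_sdiff.mp hg).1
  linarith

theorem IsMMSPartition.of_refines {N M : Finset ℕ} {v : ℕ → ℝ} {A B : ℕ → Finset ℕ}
    (hA : IsMMSPartition N M v A) (hv : ∀ g ∈ M, v g ≤ 0) (hB : IsPartition N M B)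
    (hBA : Refines N B A) : IsMMSPartition N M v B := by
  refine ⟨hB, fun j hj => ?_⟩
  obtain ⟨j', hj', hsub⟩ := hBA j hj
  exact (hA.2 j' hj').trans
    (bval_le_bval_of_subset hsub fun g hg => hv g (hA.1.1 j' hj' hg))

def moveItem (A : ℕ → Finset ℕ) (e x : ℕ) : ℕ → Finset ℕ :=
  fun a => if a = e then {x} else (A a).erase x

theorem isPartition_moveItem {N M : Finset ℕ} {A : ℕ → Finset ℕ} {e j x : ℕ}
    (hA : IsPartition N M A) (he : e ∈ N) (hAe : A e = ∅) (hj : j ∈ N) (hx : x ∈ A j) :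
    IsPartition N M (moveItem A e x) := by
  have hsub : ∀ a ∈ N, moveItem A e x a ⊆ M := by
    intro a ha
    unfold moveItem
    split_ifs
    · exact Finset.singleton_subset_iff.mpr (hA.1 j hj hx)
    · exact (Finset.erase_subset _ _).trans (hA.1 a ha)
  refine ⟨hsub, fun a ha b hb hab => ?_, ?_⟩
  · unfold moveItem
    split_ifs with hae hbe hbe
    · exact absurd (hae.trans hbe.symm) hab
    · exact Finset.disjoint_singleton_left.mpr (Finset.notMem_erase x _)
    · exact Finset.disjoint_singleton_right.mpr (Finset.notMem_erase x _)
    · exact (hA.2.1 a ha b hb hab).mono (Finset.erase_subset _ _) (Finset.erase_subset _ _)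
  · refine (Finset.biUnion_subset.mpr hsub).antisymm fun y hy => ?_
    rw [Finset.mem_biUnion]
    by_cases hyx : y = x
    · exact ⟨e, he, by simp [moveItem, hyx]⟩
    · rw [← hA.2.2, Finset.mem_biUnion] at hy
      obtain ⟨a, ha, hya⟩ := hy
      have hae : a ≠ e := by rintro rfl; simp [hAe] at hya
      exact ⟨a, ha, by simp [moveItem, hae, hyx, hya]⟩

theorem refines_moveItem {N : Finset ℕ} {A : ℕ → Finset ℕ} {e j x : ℕ} (hj : j ∈ N)
    (hx : x ∈ A j) : Refines N (moveItem A e x) A := by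
  intro a ha
  by_cases hae : a = e
  · exact ⟨j, hj, by simp [moveItem, hae, hx]⟩
  · exact ⟨a, ha, by simp only [moveItem, hae, if_false]; exact Finset.erase_subset _ _⟩

namespace IsPartition

variable {N M : Finset ℕ} {A : ℕ → Finset ℕ} {e j x : ℕ}

theorem eq_of_mem_of_mem (hA : IsPartition N M A) {a b : ℕ} (ha : a ∈ N) (hb : b ∈ N)
    (hxa : x ∈ A a) (hxb : x ∈ A b) : a = b := by
  by_contra hab
  exact Finset.disjoint_left.mp (hA.2.1 a ha b hb hab) hxa hxb

theorem card_eq_sum (hA : IsPartition N M A) : #M = ∑ j ∈ N, #(A j) := by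
  rw [← hA.2.2, Finset.card_biUnion hA.2.1]

theorem exists_splittable (hA : IsPartition N M A) {j0 t : ℕ} (he : e ∈ N) (hAe : A e = ∅)
    (hj0 : j0 ∈ N) (ht : 1 ≤ t) (htA : t ≤ #(A j0)) (hNM : #N + t ≤ #M + 1) :
    ∃ j ∈ N, 2 ≤ #(A j) ∧ (j = j0 → t < #(A j)) := by
  by_contra! hsmall
  have hej0 : e ≠ j0 := by rintro rfl; simp [hAe] at htA; omega
  have he' : e ∈ N.erase j0 := Finset.mem_erase.mpr ⟨hej0, he⟩
  have hrest : ∑ a ∈ (N.erase j0).erase e, #(A a) ≤ #((N.erase j0).erase e) • 1 := by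
    refine Finset.sum_le_card_nsmul _ _ _ fun a ha => ?_
    obtain ⟨-, haj0, haN⟩ : a ≠ e ∧ a ≠ j0 ∧ a ∈ N := by simpa using ha
    by_contra! h2
    exact haj0 (hsmall a haN h2).1
  have hMsum : #M = #(A j0) + (#(A e) + ∑ a ∈ (N.erase j0).erase e, #(A a)) := by
    rw [Finset.add_sum_erase _ (fun a => #(A a)) he',
      Finset.add_sum_erase _ (fun a => #(A a)) hj0, hA.card_eq_sum]
  have hj0le : #(A j0) ≤ t := by
    by_contra! h
    exact absurd (hsmall j0 hj0 (by omega)).2 (by omega)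
  have hcard₁ := Finset.card_erase_of_mem hj0
  have hcard₂ := Finset.card_erase_of_mem he'
  have hpos : 0 < #(N.erase j0) := Finset.card_pos.mpr ⟨e, he'⟩
  rw [hAe, Finset.card_empty] at hMsum
  rw [smul_eq_mul, mul_one] at hrest
  omega

theorem card_moveItem (hA : IsPartition N M A) {a : ℕ} (ha : a ∈ N) (hae : a ≠ e)
    (hj : j ∈ N) (hx : x ∈ A j) :
    #(moveItem A e x a) = if a = j then #(A j) - 1 else #(A a) := by
  rw [moveItem, if_neg hae]
  split_ifs with haj
  · rw [haj, Finset.card_erase_of_mem hx]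
  · rw [Finset.erase_eq_of_notMem fun hxa => haj (hA.eq_of_mem_of_mem ha hj hxa hx)]

theorem card_empty_moveItem_lt (hA : IsPartition N M A) (he : e ∈ N) (hAe : A e = ∅)
    (hj : j ∈ N) (hj2 : 2 ≤ #(A j)) (hx : x ∈ A j) :
    #{a ∈ N | moveItem A e x a = ∅} < #{a ∈ N | A a = ∅} := by
  refine Finset.card_lt_card (Finset.ssubset_iff_of_subset ?_ |>.mpr ⟨e, ?_, ?_⟩)
  · intro a
    rw [Finset.mem_filter, Finset.mem_filter]
    rintro ⟨ha, hmove⟩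
    have hae : a ≠ e := by rintro rfl; simp [moveItem] at hmove
    have hcard := hA.card_moveItem ha hae hj hx
    rw [hmove, Finset.card_empty] at hcard
    split_ifs at hcard with haj
    · omega
    · exact ⟨ha, Finset.card_eq_zero.mp hcard.symm⟩
  · simp [he, hAe]
  · rw [Finset.mem_filter]
    simp [moveItem]

theorem exists_refines_forall_nonempty (hA : IsPartition N M A) {j0 t : ℕ} (hj0 : j0 ∈ N)
    (ht : 1 ≤ t) (htA : t ≤ #(A j0)) (hNM : #N + t ≤ #M + 1) :
    ∃ B, IsPartition N M B ∧ Refines N B A ∧ (∀ j ∈ N, (B j).Nonempty) ∧ t ≤ #(B j0) := by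
  induction hE : #{a ∈ N | A a = ∅} using Nat.strong_induction_on generalizing A with
  | _ E ih =>
  by_cases hne : ∀ j ∈ N, (A j).Nonempty
  · exact ⟨A, hA, Refines.refl N A, hne, htA⟩
  push Not at hne
  obtain ⟨e, he, hAe⟩ := hne
  obtain ⟨j, hj, hj2, hjt⟩ := hA.exists_splittable he hAe hj0 ht htA hNM
  obtain ⟨x, hx⟩ : (A j).Nonempty := Finset.card_pos.mp (by omega)
  have hej0 : e ≠ j0 := by rintro rfl; simp [hAe] at htA; omega
  have htA' : t ≤ #(moveItem A e x j0) := by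
    rw [hA.card_moveItem hj0 hej0.symm hj hx]
    split_ifs with hj0j
    · have := hjt hj0j.symm
      omega
    · exact htA
  obtain ⟨B, hB, hBA, hBne, htB⟩ := ih _ (hE ▸ hA.card_empty_moveItem_lt he hAe hj hj2 hx)
    (isPartition_moveItem hA he hAe hj hx) htA' rfl
  exact ⟨B, hB, hBA.trans (refines_moveItem hj hx), hBne, htB⟩

/-- Non-singleton bundles have at least two items, and bundle `j0` has at least `t`. -/
theorem two_mul_card_add_le (hA : IsPartition N M A) (hne : ∀ j ∈ N, (A j).Nonempty)
    {j0 t : ℕ} (hj0 : j0 ∈ N) (ht : t ≤ #(A j0)) : 2 * #N + t ≤ #M + #{j ∈ N | #(A j) = 1} + 2 := by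
  set f : ℕ → ℕ := fun a => #(A a) + if #(A a) = 1 then 1 else 0
  have hsum : ∑ a ∈ N, f a = #M + #{j ∈ N | #(A j) = 1} := by
    rw [Finset.sum_add_distrib, Finset.card_filter, hA.card_eq_sum]
  have hrest : #(N.erase j0) • 2 ≤ ∑ a ∈ N.erase j0, f a := by
    refine Finset.card_nsmul_le_sum _ _ _ fun a ha => ?_
    have := Finset.card_pos.mpr (hne a (Finset.mem_of_mem_erase ha))
    simp only [f]
    split_ifs <;> omega
  have hf0 : t ≤ f j0 := le_add_right ht
  rw [← Finset.add_sum_erase _ _ hj0] at hsum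
  rw [smul_eq_mul, Finset.card_erase_of_mem hj0] at hrest
  have := Finset.card_pos.mpr ⟨j0, hj0⟩
  omega

end IsPartition

theorem number_of_single_bundles_chores_general (n c : ℕ)
    (v : ℕ → ℕ → ℝ)
    (hchores : ChoresInstance (Finset.Icc 1 n) (Finset.Icc 1 (n + c)) v)
    (i : ℕ) (hi : i ∈ Finset.Icc 1 n)
    (k : ℕ) (hk : 2 ≤ k)
    (A : ℕ → Finset ℕ)
    (hA : IsMMSPartition (Finset.Icc 1 n) (Finset.Icc 1 (n + c)) (v i) A)
    (hbundle : ∃ j ∈ Finset.Icc 1 n, (A j).card = k) :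
    ∃ A' : ℕ → Finset ℕ,
      IsMMSPartition (Finset.Icc 1 n) (Finset.Icc 1 (n + c)) (v i) A' ∧
      ∃ S ⊆ Finset.Icc 1 n, n - (c - k + 2) ≤ S.card ∧ ∀ j ∈ S, (A' j).card = 1 := by
  obtain ⟨j0, hj0, hj0k⟩ := hbundle
  have hN : #(Finset.Icc 1 n) = n := by simp
  have hM : #(Finset.Icc 1 (n + c)) = n + c := by simp
  obtain ⟨B, hB, hBA, hBne, htB⟩ := hA.1.exists_refines_forall_nonempty (t := min k (c + 1))
    hj0 (by omega) (by omega) (by omega)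
  refine ⟨B, hA.of_refines (hchores i hi) hB hBA, _, Finset.filter_subset _ _, ?_,
    fun j hj => (Finset.mem_filter.mp hj).2⟩
  have := hB.two_mul_card_add_le hBne hj0 htB
  omega

theorem number_of_single_bundles_chores (n c : ℕ) (hc : 0 < c) (hcn : c < n)
    (v : ℕ → ℕ → ℝ)
    (hchores : ChoresInstance (Finset.Icc 1 n) (Finset.Icc 1 (n + c)) v)
    (hord : OrderedChores (Finset.Icc 1 n) (Finset.Icc 1 (n + c)) v)
    (i : ℕ) (hi : i ∈ Finset.Icc 1 n)
    (k : ℕ) (hk : 2 ≤ k)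
    (A : ℕ → Finset ℕ)
    (hA : IsMMSPartition (Finset.Icc 1 n) (Finset.Icc 1 (n + c)) (v i) A)
    (hbundle : ∃ j ∈ Finset.Icc 1 n, (A j).card = k) :
    ∃ A' : ℕ → Finset ℕ,
      IsMMSPartition (Finset.Icc 1 n) (Finset.Icc 1 (n + c)) (v i) A' ∧
      ∃ S ⊆ Finset.Icc 1 n, n - (c - k + 2) ≤ S.card ∧ ∀ j ∈ S, (A' j).card = 1 :=
  number_of_single_bundles_chores_general n c v hchores i hi k hk A hA hbundle
end
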